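/- Under the multivariate hypergeometric sampling model, the estimator Ŝ = c(n - (N/K)K₀ + 9(N/K)K₁ - 16(N/K)K₂ + 8(N/K)K₃) with constant c > 0 satisfies the standard-deviation bound σ(Ŝ) ≤ 34 c (N/√K) √((N-K)/(N-1)); in particular if K ≥ αN for a constant α ∈ (0,1], then σ(Ŝ) ≤ (34c/√α) √N. -/

import Mathlib

open Finset

/-- Minkowski inequality for finite sums. -/
private lemma sqrt_sum_sq_add_le {ι : Type*} (s : Finset ι) (f g : ι → ℝ) :
    Real.sqrt (∑ x ∈ s, (f x + g x) ^ 2) ≤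
      Real.sqrt (∑ x ∈ s, f x ^ 2) + Real.sqrt (∑ x ∈ s, g x ^ 2) := by
  set A := Real.sqrt (∑ x ∈ s, f x ^ 2) with hA
  set B := Real.sqrt (∑ x ∈ s, g x ^ 2) with hB
  have hA0 : 0 ≤ A := Real.sqrt_nonneg _
  have hB0 : 0 ≤ B := Real.sqrt_nonneg _
  have hA2 : A ^ 2 = ∑ x ∈ s, f x ^ 2 := Real.sq_sqrt (by positivity)
  have hB2 : B ^ 2 = ∑ x ∈ s, g x ^ 2 := Real.sq_sqrt (by positivity)
  have hfg : ∑ x ∈ s, f x * g x ≤ A * B := by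
    refine (le_abs_self _).trans ?_
    rw [← Real.sqrt_sq_eq_abs]
    have : A * B = Real.sqrt ((∑ x ∈ s, f x ^ 2) * ∑ x ∈ s, g x ^ 2) := by
      rw [Real.sqrt_mul (by positivity)]
    rw [this]
    exact Real.sqrt_le_sqrt (sum_mul_sq_le_sq_mul_sq s f g)
  have key : ∑ x ∈ s, (f x + g x) ^ 2 ≤ (A + B) ^ 2 := by
    have : ∑ x ∈ s, (f x + g x) ^ 2
        = (∑ x ∈ s, f x ^ 2) + 2 * (∑ x ∈ s, f x * g x) + ∑ x ∈ s, g x ^ 2 := by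
      rw [Finset.mul_sum, ← Finset.sum_add_distrib, ← Finset.sum_add_distrib]
      exact Finset.sum_congr rfl fun x _ => by ring
    rw [this]
    nlinarith [hfg]
  calc Real.sqrt (∑ x ∈ s, (f x + g x) ^ 2) ≤ Real.sqrt ((A + B) ^ 2) :=
        Real.sqrt_le_sqrt key
    _ = A + B := Real.sqrt_sq (by positivity)

private lemma sqrt_sum_sq_smul {ι : Type*} (s : Finset ι) (b : ℝ) (f : ι → ℝ) :
    Real.sqrt (∑ x ∈ s, (b * f x) ^ 2) = |b| * Real.sqrt (∑ x ∈ s, f x ^ 2) := by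
  simp_rw [mul_pow, ← Finset.mul_sum]
  rw [Real.sqrt_mul (sq_nonneg b), Real.sqrt_sq_eq_abs]

private lemma sum_dev_sq {ι : Type*} (P : Finset ι) (f : ι → ℝ) (M : ℝ) (hM : 0 < M)
    (hPM : (P.card : ℝ) = M) :
    ∑ s ∈ P, (f s - (∑ s ∈ P, f s) / M) ^ 2
      = ∑ s ∈ P, f s ^ 2 - (∑ s ∈ P, f s) ^ 2 / M := by
  set T := ∑ s ∈ P, f s with hT
  have : ∑ s ∈ P, (f s - T / M) ^ 2
      = ∑ s ∈ P, f s ^ 2 - 2 * (T / M) * T + (P.card : ℝ) * (T / M) ^ 2 := by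
    rw [Finset.mul_sum, ← Finset.sum_sub_distrib]
    rw [show (P.card : ℝ) * (T / M) ^ 2 = ∑ _s ∈ P, (T / M) ^ 2 by
      rw [Finset.sum_const, nsmul_eq_mul]]
    rw [← Finset.sum_add_distrib]
    exact Finset.sum_congr rfl fun x _ => by ring
  rw [this, hPM]
  field_simp
  ring

/-- Number of `K`-subsets of `univ` containing a fixed set `t`. -/
private lemma count_supersets {Ω : Type*} [Fintype Ω] [DecidableEq Ω]
    (K : ℕ) (t : Finset Ω) (ht : t.card ≤ K) :
    ((Finset.univ.powersetCard K).filter (fun s => t ⊆ s)).card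
      = (Fintype.card Ω - t.card).choose (K - t.card) := by
  have huniv : (Finset.univ \ t).card = Fintype.card Ω - t.card := by
    rw [Finset.card_sdiff_of_subset (Finset.subset_univ t), Finset.card_univ]
  rw [← huniv, ← Finset.card_powersetCard]
  refine Finset.card_bij' (fun s _ => s \ t) (fun u _ => u ∪ t) ?_ ?_ ?_ ?_
  · intro s hs
    rw [Finset.mem_filter, Finset.mem_powersetCard] at hs
    obtain ⟨⟨hsu, hsc⟩, hts⟩ := hs
    rw [Finset.mem_powersetCard]
    exact ⟨Finset.sdiff_subset_sdiff hsu le_rfl,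
      by rw [Finset.card_sdiff_of_subset hts, hsc]⟩
  · intro u hu
    rw [Finset.mem_powersetCard] at hu
    obtain ⟨hus, huc⟩ := hu
    have hdisj : Disjoint u t := (Finset.subset_sdiff.mp hus).2
    rw [Finset.mem_filter, Finset.mem_powersetCard]
    refine ⟨⟨Finset.subset_univ _, ?_⟩, Finset.subset_union_right⟩
    rw [Finset.card_union_of_disjoint hdisj, huc, Nat.sub_add_cancel ht]
  · intro s hs
    rw [Finset.mem_filter] at hs
    exact Finset.sdiff_union_of_subset hs.2
  · intro u hu
    rw [Finset.mem_powersetCard] at hu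
    exact Finset.union_sdiff_cancel_right (Finset.subset_sdiff.mp hu.1).2

private lemma devsq_sum_le {Ω : Type*} [Fintype Ω] [DecidableEq Ω]
    (N K : ℕ) (hcard : Fintype.card Ω = N) (hK1 : 1 ≤ K) (hKN : K ≤ N) (hN2 : 2 ≤ N)
    (p : Ω → Prop) [DecidablePred p] :
    ∑ s ∈ Finset.univ.powersetCard K,
        (((s.filter p).card : ℝ)
          - (∑ s ∈ Finset.univ.powersetCard K, ((s.filter p).card : ℝ)) / (N.choose K)) ^ 2
      ≤ (N.choose K : ℝ) * ((K : ℝ) * ((N : ℝ) - K) / ((N : ℝ) - 1)) := by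
  set P := Finset.univ.powersetCard K (α := Ω) with hP
  have hMn : 0 < N.choose K := Nat.choose_pos hKN
  have hM : (0:ℝ) < (N.choose K : ℝ) := by exact_mod_cast hMn
  have hPcard : (P.card : ℝ) = (N.choose K : ℝ) := by
    rw [hP, Finset.card_powersetCard, Finset.card_univ, hcard]
  have hN0 : (0:ℝ) < (N:ℝ) := by exact_mod_cast (by omega : 0 < N)
  have hN1 : (0:ℝ) < (N:ℝ) - 1 := by
    have : (1:ℝ) < (N:ℝ) := by exact_mod_cast (by omega : 1 < N)
    linarith
  have hKr : (0:ℝ) < (K:ℝ) := by exact_mod_cast hK1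
  have hNKr : (0:ℝ) ≤ (N:ℝ) - (K:ℝ) := by
    have : (K:ℝ) ≤ (N:ℝ) := by exact_mod_cast hKN
    linarith
  have hRHS0 : (0:ℝ) ≤ (N.choose K : ℝ) * ((K : ℝ) * ((N : ℝ) - K) / ((N : ℝ) - 1)) := by
    apply mul_nonneg hM.le
    apply div_nonneg (mul_nonneg hKr.le hNKr) hN1.le
  -- rewrite deviation sum
  rw [sum_dev_sq P _ _ hM hPcard]
  set A := Finset.univ.filter p with hA
  set m := A.card with hm
  have hmN : m ≤ N := by
    rw [hm, ← hcard, ← Finset.card_univ]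
    exact Finset.card_filter_le _ _
  have hcount : ∀ s : Finset Ω, (s.filter p).card = ∑ ω ∈ A, if ω ∈ s then 1 else 0 := by
    intro s
    rw [← Finset.card_filter]
    congr 1
    ext ω
    simp only [hA, Finset.mem_filter, Finset.mem_univ, true_and]
    tauto
  have hone : ∀ ω : Ω, (P.filter (fun s => ω ∈ s)).card = (N-1).choose (K-1) := by
    intro ω
    have h := count_supersets (Ω := Ω) K {ω} (by simpa using hK1)
    simp only [Finset.singleton_subset_iff, Finset.card_singleton, hcard] at h
    exact h
  -- first moment
  have hS1 : ∑ s ∈ P, (s.filter p).card = m * (N-1).choose (K-1) := by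
    calc ∑ s ∈ P, (s.filter p).card
        = ∑ s ∈ P, ∑ ω ∈ A, (if ω ∈ s then 1 else 0) :=
          Finset.sum_congr rfl fun s _ => hcount s
      _ = ∑ ω ∈ A, ∑ s ∈ P, (if ω ∈ s then 1 else 0) := Finset.sum_comm
      _ = ∑ ω ∈ A, (P.filter (fun s => ω ∈ s)).card :=
          Finset.sum_congr rfl fun ω _ => (Finset.card_filter _ _).symm
      _ = ∑ _ω ∈ A, (N-1).choose (K-1) := Finset.sum_congr rfl fun ω _ => hone ω
      _ = m * (N-1).choose (K-1) := by rw [Finset.sum_const, smul_eq_mul]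
  have hS1' : ∑ s ∈ P, ((s.filter p).card : ℝ)
      = (m : ℝ) * ((N-1).choose (K-1) : ℝ) := by
    rw [← Nat.cast_sum, hS1]; push_cast; ring
  rcases eq_or_lt_of_le hK1 with hK1' | hK2
  · -- K = 1
    have hKeq : K = 1 := hK1'.symm
    have hle : ∑ s ∈ P, ((s.filter p).card : ℝ) ^ 2 ≤ (N.choose K : ℝ) := by
      calc ∑ s ∈ P, ((s.filter p).card : ℝ) ^ 2 ≤ ∑ _s ∈ P, (1:ℝ) := by
            apply Finset.sum_le_sum
            intro s hs
            have hs' : s.card = K := (Finset.mem_powersetCard.mp hs).2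
            have h1 : (s.filter p).card ≤ 1 := by
              calc (s.filter p).card ≤ s.card := Finset.card_filter_le _ _
                _ = 1 := by rw [hs', hKeq]
            have : ((s.filter p).card : ℝ) ≤ 1 := by exact_mod_cast h1
            nlinarith [Nat.cast_nonneg (α := ℝ) (s.filter p).card]
        _ = (N.choose K : ℝ) := by rw [Finset.sum_const, nsmul_eq_mul, mul_one, hPcard]
    have hRHS : (N.choose K : ℝ) * ((K : ℝ) * ((N : ℝ) - K) / ((N : ℝ) - 1))
        = (N.choose K : ℝ) := by
      rw [hKeq]; push_cast; field_simp
    rw [hRHS]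
    have : (0:ℝ) ≤ (∑ s ∈ P, ((s.filter p).card : ℝ)) ^ 2 / (N.choose K : ℝ) :=
      div_nonneg (sq_nonneg _) hM.le
    linarith
  · -- 2 ≤ K
    have hK2' : 2 ≤ K := hK2
    have hN2' : 2 ≤ N := hN2
    have htwo : ∀ ω ω' : Ω, ω ≠ ω' →
        (P.filter (fun s => ω ∈ s ∧ ω' ∈ s)).card = (N-2).choose (K-2) := by
      intro ω ω' hne
      have h := count_supersets (Ω := Ω) K {ω, ω'}
        (by rw [Finset.card_pair hne]; exact hK2')
      rw [Finset.card_pair hne, hcard] at h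
      rw [← h]
      apply congrArg
      apply Finset.filter_congr
      intro s _
      simp [Finset.insert_subset_iff]
    have hS2 : ∑ s ∈ P, (s.filter p).card ^ 2
        = m * ((N-1).choose (K-1) + (m-1) * (N-2).choose (K-2)) := by
      have hsq : ∀ s : Finset Ω, (s.filter p).card ^ 2
          = ∑ ω ∈ A, ∑ ω' ∈ A, (if ω ∈ s ∧ ω' ∈ s then 1 else 0) := by
        intro s
        rw [pow_two, hcount s, Finset.sum_mul_sum]
        refine Finset.sum_congr rfl fun ω _ => Finset.sum_congr rfl fun ω' _ => ?_
        by_cases h1 : ω ∈ s <;> by_cases h2 : ω' ∈ s <;> simp [h1, h2]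
      calc ∑ s ∈ P, (s.filter p).card ^ 2
          = ∑ s ∈ P, ∑ ω ∈ A, ∑ ω' ∈ A, (if ω ∈ s ∧ ω' ∈ s then 1 else 0) :=
            Finset.sum_congr rfl fun s _ => hsq s
        _ = ∑ ω ∈ A, ∑ s ∈ P, ∑ ω' ∈ A, (if ω ∈ s ∧ ω' ∈ s then 1 else 0) :=
            Finset.sum_comm
        _ = ∑ ω ∈ A, ∑ ω' ∈ A, ∑ s ∈ P, (if ω ∈ s ∧ ω' ∈ s then 1 else 0) :=
            Finset.sum_congr rfl fun ω _ => Finset.sum_comm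
        _ = ∑ ω ∈ A, ∑ ω' ∈ A, (P.filter (fun s => ω ∈ s ∧ ω' ∈ s)).card :=
            Finset.sum_congr rfl fun ω _ => Finset.sum_congr rfl fun ω' _ =>
              (Finset.card_filter _ _).symm
        _ = ∑ ω ∈ A, ((N-1).choose (K-1) + (m-1) * (N-2).choose (K-2)) := by
            refine Finset.sum_congr rfl fun ω hω => ?_
            rw [← Finset.add_sum_erase A _ hω]
            congr 1
            · have hfeq : P.filter (fun s => ω ∈ s ∧ ω ∈ s) = P.filter (fun s => ω ∈ s) :=
                Finset.filter_congr (fun s _ => by simp)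
              rw [hfeq]
              exact hone ω
            · rw [Finset.sum_congr rfl (fun ω' hω' =>
                htwo ω ω' (Ne.symm (Finset.ne_of_mem_erase hω')))]
              rw [Finset.sum_const, Finset.card_erase_of_mem hω, smul_eq_mul]
        _ = m * ((N-1).choose (K-1) + (m-1) * (N-2).choose (K-2)) := by
            rw [Finset.sum_const, smul_eq_mul]
    -- cast the choose identities
    have hI1 : (N:ℕ) * (N-1).choose (K-1) = N.choose K * K := by
      have h := Nat.add_one_mul_choose_eq (N-1) (K-1)
      rw [show N - 1 + 1 = N by omega, show K - 1 + 1 = K by omega] at h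
      exact h
    have hI2 : (N-1) * (N-2).choose (K-2) = (N-1).choose (K-1) * (K-1) := by
      have h := Nat.add_one_mul_choose_eq (N-2) (K-2)
      rw [show N - 2 + 1 = N - 1 by omega, show K - 2 + 1 = K - 1 by omega] at h
      exact h
    have hC1 : ((N-1).choose (K-1) : ℝ) = (N.choose K : ℝ) * K / N := by
      rw [eq_div_iff (ne_of_gt hN0)]
      exact_mod_cast (mul_comm (N:ℕ) ((N-1).choose (K-1)) ▸ hI1)
    have hC2 : ((N-2).choose (K-2) : ℝ)
        = ((N-1).choose (K-1) : ℝ) * ((K:ℝ) - 1) / ((N:ℝ) - 1) := by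
      rw [eq_div_iff (ne_of_gt hN1)]
      have := congrArg (Nat.cast (R := ℝ)) hI2
      push_cast [Nat.cast_sub (by omega : 1 ≤ N), Nat.cast_sub (by omega : 1 ≤ K)] at this
      linarith [this]
    rcases Nat.eq_zero_or_pos m with hm0 | hm1
    · -- m = 0 : everything vanishes
      have hS2' : ∑ s ∈ P, ((s.filter p).card : ℝ) ^ 2 = 0 := by
        have : (∑ s ∈ P, (s.filter p).card ^ 2) = 0 := by rw [hS2, hm0]; ring
        calc ∑ s ∈ P, ((s.filter p).card : ℝ) ^ 2
            = ((∑ s ∈ P, (s.filter p).card ^ 2 : ℕ) : ℝ) := by push_cast; ring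
          _ = 0 := by rw [this]; norm_num
      have hS1'' : ∑ s ∈ P, ((s.filter p).card : ℝ) = 0 := by
        rw [hS1', hm0]; norm_num
      rw [hS2', hS1'']
      simpa using hRHS0
    · have hmcast : ((m - 1 : ℕ) : ℝ) = (m:ℝ) - 1 := by
        push_cast [Nat.cast_sub hm1]; ring
      have hS2' : ∑ s ∈ P, ((s.filter p).card : ℝ) ^ 2
          = (m:ℝ) * (((N-1).choose (K-1) : ℝ)
              + ((m:ℝ) - 1) * ((N-2).choose (K-2) : ℝ)) := by
        calc ∑ s ∈ P, ((s.filter p).card : ℝ) ^ 2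
            = ((∑ s ∈ P, (s.filter p).card ^ 2 : ℕ) : ℝ) := by push_cast; ring
          _ = _ := by rw [hS2]; push_cast [Nat.cast_sub hm1]; ring
      rw [hS2', hS1']
      have hmr : (0:ℝ) ≤ (m:ℝ) := Nat.cast_nonneg m
      have hmNr : (m:ℝ) ≤ (N:ℝ) := by exact_mod_cast hmN
      have key : (m:ℝ) * (((N-1).choose (K-1) : ℝ)
              + ((m:ℝ) - 1) * ((N-2).choose (K-2) : ℝ))
            - ((m:ℝ) * ((N-1).choose (K-1) : ℝ)) ^ 2 / (N.choose K : ℝ)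
          = ((N.choose K : ℝ) * ((K : ℝ) * ((N : ℝ) - K) / ((N : ℝ) - 1)))
              * ((m:ℝ) * ((N:ℝ) - m) / (N:ℝ) ^ 2) := by
        rw [hC2, hC1]
        field_simp
        ring
      rw [key]
      have hfrac : (m:ℝ) * ((N:ℝ) - m) / (N:ℝ) ^ 2 ≤ 1 := by
        rw [div_le_one (by positivity)]
        nlinarith
      have hfrac0 : (0:ℝ) ≤ (m:ℝ) * ((N:ℝ) - m) / (N:ℝ) ^ 2 := by
        apply div_nonneg (mul_nonneg hmr (by linarith)) (by positivity)
      calc ((N.choose K : ℝ) * ((K : ℝ) * ((N : ℝ) - K) / ((N : ℝ) - 1)))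
              * ((m:ℝ) * ((N:ℝ) - m) / (N:ℝ) ^ 2)
          ≤ ((N.choose K : ℝ) * ((K : ℝ) * ((N : ℝ) - K) / ((N : ℝ) - 1))) * 1 :=
            mul_le_mul_of_nonneg_left hfrac hRHS0
        _ = _ := by ring

/-- Standard-deviation bound for the random-sampling estimator of the
Benincasa–Dowker action: under multivariate hypergeometric sampling,
`σ(Ŝ) ≤ 34·c·(N/√K)·√((N-K)/(N-1))`, and if `K ≥ αN` then
`σ(Ŝ) ≤ (34c/√α)·√N`. -/
theorem sampling_estimator_stddev_bound {Ω : Type*} [Fintype Ω] [DecidableEq Ω]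
    (N K : ℕ) (hcard : Fintype.card Ω = N)
    (hK1 : 1 ≤ K) (hKN : K ≤ N) (hN2 : 2 ≤ N)
    (cls : Ω → ℕ)
    (E : (Finset Ω → ℝ) → ℝ)
    (hE : ∀ f, E f = (∑ s ∈ Finset.univ.powersetCard K, f s) / (N.choose K))
    (Ki : ℕ → Finset Ω → ℝ)
    (hKi : ∀ i s, Ki i s = ((s.filter (fun ω => cls ω = i)).card : ℝ))
    (c n α : ℝ) (hc : 0 < c) (hα0 : 0 < α) (hα1 : α ≤ 1)
    (Shat : Finset Ω → ℝ)
    (hShat : ∀ s, Shat s = c * (n - ((N : ℝ) / K) * Ki 0 s + 9 * ((N : ℝ) / K) * Ki 1 s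
        - 16 * ((N : ℝ) / K) * Ki 2 s + 8 * ((N : ℝ) / K) * Ki 3 s)) :
    Real.sqrt (E (fun s => Shat s ^ 2) - (E Shat) ^ 2)
      ≤ 34 * c * ((N : ℝ) / Real.sqrt K) * Real.sqrt (((N : ℝ) - K) / ((N : ℝ) - 1)) ∧
    (α * N ≤ (K : ℝ) →
      Real.sqrt (E (fun s => Shat s ^ 2) - (E Shat) ^ 2)
        ≤ 34 * c / Real.sqrt α * Real.sqrt N) := by
  classical
  set P := Finset.univ.powersetCard K (α := Ω) with hP
  have hMn : 0 < N.choose K := Nat.choose_pos hKN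
  set M : ℝ := (N.choose K : ℝ) with hMdef
  have hM : (0:ℝ) < M := by rw [hMdef]; exact_mod_cast hMn
  have hPcard : (P.card : ℝ) = M := by
    rw [hP, Finset.card_powersetCard, Finset.card_univ, hcard]
  have hKr : (0:ℝ) < (K:ℝ) := by exact_mod_cast hK1
  have hN0 : (0:ℝ) < (N:ℝ) := by exact_mod_cast (by omega : 0 < N)
  have hN1 : (0:ℝ) < (N:ℝ) - 1 := by
    have : (1:ℝ) < (N:ℝ) := by exact_mod_cast (by omega : 1 < N)
    linarith
  have hNK : (0:ℝ) ≤ (N:ℝ) - (K:ℝ) := by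
    have : (K:ℝ) ≤ (N:ℝ) := by exact_mod_cast hKN
    linarith
  set a : ℝ := (N:ℝ) / K with ha
  have ha0 : 0 < a := div_pos hN0 hKr
  set B : ℝ := (K:ℝ) * ((N:ℝ) - K) / ((N:ℝ) - 1) with hB
  have hB0 : 0 ≤ B := div_nonneg (mul_nonneg hKr.le hNK) hN1.le
  -- deviation functions
  set F : ℕ → Finset Ω → ℝ := fun i s => Ki i s - (∑ s ∈ P, Ki i s) / M with hF
  have hFbound : ∀ i, Real.sqrt (∑ s ∈ P, F i s ^ 2) ≤ Real.sqrt (M * B) := by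
    intro i
    apply Real.sqrt_le_sqrt
    have := devsq_sum_le N K hcard hK1 hKN hN2 (fun ω => cls ω = i)
    simp only [hF, hKi]
    exact this
  -- expectation of Shat
  have hsumShat : ∑ s ∈ P, Shat s
      = c * (M * n - a * (∑ s ∈ P, Ki 0 s) + 9 * a * (∑ s ∈ P, Ki 1 s)
          - 16 * a * (∑ s ∈ P, Ki 2 s) + 8 * a * (∑ s ∈ P, Ki 3 s)) := by
    have : ∀ s ∈ P, Shat s = c * n - c * a * Ki 0 s + 9 * c * a * Ki 1 s
        - 16 * c * a * Ki 2 s + 8 * c * a * Ki 3 s := fun s _ => by rw [hShat]; ring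
    rw [Finset.sum_congr rfl this, Finset.sum_add_distrib, Finset.sum_sub_distrib,
      Finset.sum_add_distrib, Finset.sum_sub_distrib, Finset.sum_const,
      ← Finset.mul_sum, ← Finset.mul_sum, ← Finset.mul_sum, ← Finset.mul_sum,
      nsmul_eq_mul, hPcard]
    ring
  have hEShat : E Shat = (∑ s ∈ P, Shat s) / M := hE Shat
  have hdev : ∀ s, Shat s - E Shat
      = (-(c * a)) * F 0 s + ((9 * c * a) * F 1 s
          + ((-(16 * c * a)) * F 2 s + (8 * c * a) * F 3 s)) := by
    intro s
    rw [hEShat, hsumShat, hShat, hF]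
    field_simp
    ring
  -- variance identity
  have hVar : E (fun s => Shat s ^ 2) - (E Shat) ^ 2
      = (∑ s ∈ P, (Shat s - E Shat) ^ 2) / M := by
    rw [hEShat]
    rw [sum_dev_sq P Shat M hM hPcard, hE]
    field_simp
  -- Minkowski chain
  have hMink : Real.sqrt (∑ s ∈ P, (Shat s - E Shat) ^ 2)
      ≤ 34 * c * a * Real.sqrt (M * B) := by
    have h0 : Real.sqrt (∑ s ∈ P, (Shat s - E Shat) ^ 2)
        = Real.sqrt (∑ s ∈ P, ((-(c * a)) * F 0 s + ((9 * c * a) * F 1 s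
            + ((-(16 * c * a)) * F 2 s + (8 * c * a) * F 3 s))) ^ 2) := by
      congr 1
      exact Finset.sum_congr rfl fun s _ => by rw [hdev s]
    have hca : 0 < c * a := mul_pos hc ha0
    have step1 : Real.sqrt (∑ s ∈ P, ((-(c * a)) * F 0 s + ((9 * c * a) * F 1 s
            + ((-(16 * c * a)) * F 2 s + (8 * c * a) * F 3 s))) ^ 2)
        ≤ Real.sqrt (∑ s ∈ P, ((-(c * a)) * F 0 s) ^ 2)
          + Real.sqrt (∑ s ∈ P, ((9 * c * a) * F 1 s
            + ((-(16 * c * a)) * F 2 s + (8 * c * a) * F 3 s)) ^ 2) :=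
      sqrt_sum_sq_add_le P _ _
    have step2 : Real.sqrt (∑ s ∈ P, ((9 * c * a) * F 1 s
            + ((-(16 * c * a)) * F 2 s + (8 * c * a) * F 3 s)) ^ 2)
        ≤ Real.sqrt (∑ s ∈ P, ((9 * c * a) * F 1 s) ^ 2)
          + Real.sqrt (∑ s ∈ P, ((-(16 * c * a)) * F 2 s + (8 * c * a) * F 3 s) ^ 2) :=
      sqrt_sum_sq_add_le P _ _
    have step3 : Real.sqrt (∑ s ∈ P, ((-(16 * c * a)) * F 2 s + (8 * c * a) * F 3 s) ^ 2)
        ≤ Real.sqrt (∑ s ∈ P, ((-(16 * c * a)) * F 2 s) ^ 2)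
          + Real.sqrt (∑ s ∈ P, ((8 * c * a) * F 3 s) ^ 2) :=
      sqrt_sum_sq_add_le P _ _
    have e0 : Real.sqrt (∑ s ∈ P, ((-(c * a)) * F 0 s) ^ 2)
        = (c * a) * Real.sqrt (∑ s ∈ P, F 0 s ^ 2) := by
      rw [sqrt_sum_sq_smul P _ (F 0), abs_neg, abs_of_pos hca]
    have e1 : Real.sqrt (∑ s ∈ P, ((9 * c * a) * F 1 s) ^ 2)
        = (9 * c * a) * Real.sqrt (∑ s ∈ P, F 1 s ^ 2) := by
      rw [sqrt_sum_sq_smul P _ (F 1), abs_of_pos (by positivity)]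
    have e2 : Real.sqrt (∑ s ∈ P, ((-(16 * c * a)) * F 2 s) ^ 2)
        = (16 * c * a) * Real.sqrt (∑ s ∈ P, F 2 s ^ 2) := by
      rw [sqrt_sum_sq_smul P _ (F 2), abs_neg, abs_of_pos (by positivity)]
    have e3 : Real.sqrt (∑ s ∈ P, ((8 * c * a) * F 3 s) ^ 2)
        = (8 * c * a) * Real.sqrt (∑ s ∈ P, F 3 s ^ 2) := by
      rw [sqrt_sum_sq_smul P _ (F 3), abs_of_pos (by positivity)]
    rw [e0] at step1
    rw [e1] at step2
    rw [e2, e3] at step3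
    have hb0 := hFbound 0
    have hb1 := hFbound 1
    have hb2 := hFbound 2
    have hb3 := hFbound 3
    have hsq0 := Real.sqrt_nonneg (∑ s ∈ P, F 0 s ^ 2)
    have hsq1 := Real.sqrt_nonneg (∑ s ∈ P, F 1 s ^ 2)
    have hsq2 := Real.sqrt_nonneg (∑ s ∈ P, F 2 s ^ 2)
    have hsq3 := Real.sqrt_nonneg (∑ s ∈ P, F 3 s ^ 2)
    rw [h0]
    calc Real.sqrt (∑ s ∈ P, ((-(c * a)) * F 0 s + ((9 * c * a) * F 1 s
            + ((-(16 * c * a)) * F 2 s + (8 * c * a) * F 3 s))) ^ 2)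
        ≤ (c * a) * Real.sqrt (∑ s ∈ P, F 0 s ^ 2)
          + ((9 * c * a) * Real.sqrt (∑ s ∈ P, F 1 s ^ 2)
            + ((16 * c * a) * Real.sqrt (∑ s ∈ P, F 2 s ^ 2)
              + (8 * c * a) * Real.sqrt (∑ s ∈ P, F 3 s ^ 2))) := by
          linarith [step1, step2, step3]
      _ ≤ (c * a) * Real.sqrt (M * B)
          + ((9 * c * a) * Real.sqrt (M * B)
            + ((16 * c * a) * Real.sqrt (M * B)
              + (8 * c * a) * Real.sqrt (M * B))) := by
          refine add_le_add (mul_le_mul_of_nonneg_left hb0 hca.le)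
            (add_le_add (mul_le_mul_of_nonneg_left hb1 (by positivity))
              (add_le_add (mul_le_mul_of_nonneg_left hb2 (by positivity))
                (mul_le_mul_of_nonneg_left hb3 (by positivity))))
      _ = 34 * c * a * Real.sqrt (M * B) := by ring
  -- standard deviation identity
  have hstd : Real.sqrt (E (fun s => Shat s ^ 2) - (E Shat) ^ 2)
      = Real.sqrt (∑ s ∈ P, (Shat s - E Shat) ^ 2) / Real.sqrt M := by
    rw [hVar, Real.sqrt_div (Finset.sum_nonneg fun s _ => sq_nonneg _) M]
  have hsqM : (0:ℝ) < Real.sqrt M := Real.sqrt_pos.mpr hM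
  have hMB : Real.sqrt (M * B) = Real.sqrt M * Real.sqrt B := Real.sqrt_mul hM.le B
  have part1 : Real.sqrt (E (fun s => Shat s ^ 2) - (E Shat) ^ 2)
      ≤ 34 * c * ((N : ℝ) / Real.sqrt K) * Real.sqrt (((N : ℝ) - K) / ((N : ℝ) - 1)) := by
    rw [hstd]
    have h1 : Real.sqrt (∑ s ∈ P, (Shat s - E Shat) ^ 2) / Real.sqrt M
        ≤ (34 * c * a * Real.sqrt (M * B)) / Real.sqrt M := by
      gcongr
    refine h1.trans (le_of_eq ?_)
    rw [hMB]
    have hclean : 34 * c * a * (Real.sqrt M * Real.sqrt B) / Real.sqrt M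
        = 34 * c * a * Real.sqrt B := by
      field_simp
    rw [hclean]
    have hBsplit : Real.sqrt B = Real.sqrt K * Real.sqrt (((N:ℝ) - K) / ((N:ℝ) - 1)) := by
      rw [hB, mul_div_assoc, Real.sqrt_mul hKr.le]
    rw [hBsplit]
    have haK : a * Real.sqrt K = (N:ℝ) / Real.sqrt K := by
      rw [ha, div_mul_eq_mul_div, div_eq_div_iff hKr.ne' (Real.sqrt_pos.mpr hKr).ne']
      rw [mul_assoc, Real.mul_self_sqrt hKr.le]
    calc 34 * c * a * (Real.sqrt K * Real.sqrt (((N:ℝ) - K) / ((N:ℝ) - 1)))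
        = 34 * c * (a * Real.sqrt K) * Real.sqrt (((N:ℝ) - K) / ((N:ℝ) - 1)) := by ring
      _ = 34 * c * ((N:ℝ) / Real.sqrt K) * Real.sqrt (((N:ℝ) - K) / ((N:ℝ) - 1)) := by
          rw [haK]
  refine ⟨part1, fun hαK => part1.trans ?_⟩
  -- second part
  have hK1r : (1:ℝ) ≤ (K:ℝ) := by exact_mod_cast hK1
  have hs1 : Real.sqrt (((N:ℝ) - K) / ((N:ℝ) - 1)) ≤ 1 := by
    rw [Real.sqrt_le_one]
    rw [div_le_one hN1]
    linarith
  have hsαN : Real.sqrt (α * N) = Real.sqrt α * Real.sqrt N := Real.sqrt_mul hα0.le _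
  have hpos : (0:ℝ) < Real.sqrt α * Real.sqrt N := by
    apply mul_pos (Real.sqrt_pos.mpr hα0) (Real.sqrt_pos.mpr hN0)
  have hsK : Real.sqrt α * Real.sqrt N ≤ Real.sqrt K := by
    rw [← hsαN]
    exact Real.sqrt_le_sqrt hαK
  have h2 : (N:ℝ) / Real.sqrt K ≤ Real.sqrt N / Real.sqrt α := by
    calc (N:ℝ) / Real.sqrt K ≤ (N:ℝ) / (Real.sqrt α * Real.sqrt N) :=
          div_le_div_of_nonneg_left hN0.le hpos hsK
      _ = Real.sqrt N / Real.sqrt α := by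
          rw [div_eq_div_iff hpos.ne' (Real.sqrt_pos.mpr hα0).ne']
          calc (N:ℝ) * Real.sqrt α = (Real.sqrt N * Real.sqrt N) * Real.sqrt α := by
                rw [Real.mul_self_sqrt hN0.le]
            _ = Real.sqrt N * (Real.sqrt α * Real.sqrt N) := by ring
  calc 34 * c * ((N : ℝ) / Real.sqrt K) * Real.sqrt (((N : ℝ) - K) / ((N : ℝ) - 1))
      ≤ 34 * c * (Real.sqrt N / Real.sqrt α) * 1 := by
        apply mul_le_mul (mul_le_mul_of_nonneg_left h2 (by positivity)) hs1
          (Real.sqrt_nonneg _) (by positivity)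
    _ = 34 * c / Real.sqrt α * Real.sqrt N := by ring
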